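/- Let p be an odd prime, q = p^e with e ≥ 2, 1 ≤ t ≤ e-1, 0 ≤ u, v ≤ (p-1)/2, s = (q-1)/2 - (u + v·p^t), and let i be the integer with base-p digits p-1-a in position 0, p-1-b in position t, and p-1 in all other positions, where 0 ≤ a ≤ 2u and 0 ≤ b ≤ 2v. Then C(i, 2s) ≡ (-1)^(a+b) · C(2u, a) · C(2v, b) (mod p). -/

import Mathlib

/-! By Lucas's theorem, `C(i, 2s)` is congruent to the product of the binomial coefficients of
the base-`p` digits. Since `2s = p^e - 1 - (2u + 2v p^t)`, the digits of `2s` are those of `i`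
with `a, b` replaced by `2u, 2v`. So every factor is `C(p-1, p-1) = 1` except two of the form
`C(p-1-x, p-1-y) = C(p-1-x, y-x)`, and `C(p-1-x, m) ≡ (-1)^m C(x+m, m)` because
`p-1-x ≡ -(x+1)` and the descending factorial at `-(x+1)` is `(-1)^m` times the ascending one
at `x+1`. -/

open Finset
open scoped Nat

namespace Nat

theorem sum_range_succ_mul_pow (c : ℕ → ℕ) (p e : ℕ) :
    ∑ j ∈ range (e + 1), c j * p ^ j = c 0 + p * ∑ j ∈ range e, c (j + 1) * p ^ j := by
  rw [sum_range_succ', mul_sum, add_comm]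
  simp only [pow_zero, mul_one, pow_succ]
  congr 1
  exact sum_congr rfl fun j _ => by ring

variable {p : ℕ} {c : ℕ → ℕ}

theorem sum_mul_pow_div_pow_mod (hc : ∀ j, c j < p) {i e : ℕ} (hi : i < e) :
    (∑ j ∈ range e, c j * p ^ j) / p ^ i % p = c i := by
  induction i generalizing c e with
  | zero =>
    obtain ⟨e, rfl⟩ : ∃ e', e = e' + 1 := ⟨e - 1, by omega⟩
    rw [sum_range_succ_mul_pow, pow_zero, Nat.div_one, Nat.add_mul_mod_self_left,
      Nat.mod_eq_of_lt (hc 0)]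
  | succ i ih =>
    obtain ⟨e, rfl⟩ : ∃ e', e = e' + 1 := ⟨e - 1, by omega⟩
    have hp : 0 < p := (Nat.zero_le _).trans_lt (hc 0)
    rw [sum_range_succ_mul_pow, pow_succ', ← Nat.div_div_eq_div_mul, Nat.add_mul_div_left _ _ hp,
      Nat.div_eq_of_lt (hc 0), zero_add]
    exact ih (fun j => hc (j + 1)) (by omega)

theorem sum_mul_pow_add_sum_sub_one_sub_mul_pow (hc : ∀ j, c j < p) (e : ℕ) :
    ∑ j ∈ range e, c j * p ^ j + ∑ j ∈ range e, (p - 1 - c j) * p ^ j = p ^ e - 1 := by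
  have hp : 1 ≤ p := (Nat.zero_le _).trans_lt (hc 0)
  rw [← sum_add_distrib, ← geom_sum_mul_of_one_le hp, sum_mul]
  refine sum_congr rfl fun j _ => ?_
  rw [← add_mul, Nat.add_sub_cancel' (by have := hc j; omega), mul_comm]

theorem sum_mul_pow_lt (hc : ∀ j, c j < p) (e : ℕ) :
    ∑ j ∈ range e, c j * p ^ j < p ^ e := by
  have hp : 0 < p := (Nat.zero_le _).trans_lt (hc 0)
  have := sum_mul_pow_add_sum_sub_one_sub_mul_pow hc e
  have := pow_pos hp e
  omega

end Nat

namespace ZMod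

variable {p : ℕ} [Fact p.Prime]

theorem natCast_choose_sum_mul_pow {c d : ℕ → ℕ} (hc : ∀ j, c j < p) (hd : ∀ j, d j < p)
    (e : ℕ) :
    ((∑ j ∈ range e, c j * p ^ j).choose (∑ j ∈ range e, d j * p ^ j) : ZMod p) =
      ∏ j ∈ range e, ((c j).choose (d j) : ZMod p) := by
  rw [(natCast_eq_natCast_iff _ _ _).mpr (Choose.choose_modEq_prod_range_choose_nat
    (Nat.sum_mul_pow_lt hc e) (Nat.sum_mul_pow_lt hd e)), Nat.cast_prod]
  refine prod_congr rfl fun j hj => ?_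
  rw [Nat.sum_mul_pow_div_pow_mod hc (mem_range.mp hj),
    Nat.sum_mul_pow_div_pow_mod hd (mem_range.mp hj)]

theorem natCast_choose_sub_one_sub {x m : ℕ} (h : x + m < p) :
    ((p - 1 - x).choose m : ZMod p) = (-1) ^ m * ((x + m).choose m : ZMod p) := by
  have hfac : (m ! : ZMod p) ≠ 0 := by
    rw [Ne, natCast_eq_zero_iff, (Fact.out : p.Prime).dvd_factorial]
    omega
  have hneg : ((p - 1 - x : ℕ) : ZMod p) = -((x + 1 : ℕ) : ZMod p) := by
    rw [eq_neg_iff_add_eq_zero, ← Nat.cast_add, show p - 1 - x + (x + 1) = p by omega,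
      natCast_self]
  refine mul_left_cancel₀ hfac ?_
  calc (m ! : ZMod p) * (p - 1 - x).choose m
      = (descPochhammer (ZMod p) m).eval (-((x + 1 : ℕ) : ZMod p)) := by
        rw [← hneg, descPochhammer_eval_eq_descFactorial,
          Nat.descFactorial_eq_factorial_mul_choose, Nat.cast_mul]
    _ = (-1) ^ m * (ascPochhammer (ZMod p) m).eval ((x + 1 : ℕ) : ZMod p) := by
        rw [← neg_neg ((x + 1 : ℕ) : ZMod p), ascPochhammer_eval_neg_eq_descPochhammer, neg_neg,
          ← mul_assoc, ← mul_pow, neg_one_mul, neg_neg, one_pow, one_mul]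
    _ = (m ! : ZMod p) * ((-1) ^ m * (x + m).choose m) := by
        rw [← Nat.cast_ascFactorial, Nat.ascFactorial_eq_factorial_mul_choose, Nat.cast_mul]
        ring

theorem natCast_choose_sub_one_sub_sub_one_sub {x y : ℕ} (hxy : x ≤ y) (hy : y < p) :
    ((p - 1 - x).choose (p - 1 - y) : ZMod p) = (-1) ^ (y - x) * (y.choose x : ZMod p) := by
  rw [show p - 1 - y = p - 1 - x - (y - x) by omega, Nat.choose_symm (by omega),
    natCast_choose_sub_one_sub (by omega), Nat.add_sub_cancel' hxy, Nat.choose_symm hxy]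

theorem natCast_choose_sum_sub_one_sub_mul_pow {c d : ℕ → ℕ} (hcd : ∀ j, c j ≤ d j)
    (hd : ∀ j, d j < p) (e : ℕ) :
    ((∑ j ∈ range e, (p - 1 - c j) * p ^ j).choose (∑ j ∈ range e, (p - 1 - d j) * p ^ j)
        : ZMod p) =
      ∏ j ∈ range e, (-1) ^ (d j - c j) * ((d j).choose (c j) : ZMod p) := by
  have hp : 0 < p := (Nat.zero_le _).trans_lt (hd 0)
  rw [natCast_choose_sum_mul_pow (fun j => by omega) (fun j => by omega)]
  exact prod_congr rfl fun j _ => natCast_choose_sub_one_sub_sub_one_sub (hcd j) (hd j)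

end ZMod

theorem neg_one_pow_two_mul_sub {R : Type*} [Ring R] {x y : ℕ} (h : x ≤ 2 * y) :
    (-1 : R) ^ (2 * y - x) = (-1) ^ x := by
  rw [neg_one_pow_eq_pow_mod_two, neg_one_pow_eq_pow_mod_two (n := x)]
  congr 1
  omega

def twoDigits (t x y : ℕ) (j : ℕ) : ℕ :=
  if j = 0 then x else if j = t then y else 0

theorem sum_twoDigits_mul_pow {p t e : ℕ} (x y : ℕ) (ht0 : t ≠ 0) (hte : t < e) :
    ∑ j ∈ range e, twoDigits t x y j * p ^ j = x + y * p ^ t := by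
  rw [sum_eq_add_of_mem 0 t (mem_range.mpr (by omega)) (mem_range.mpr hte) ht0.symm
    fun j _ hj => by simp [twoDigits, hj.1, hj.2]]
  simp [twoDigits, ht0]

theorem stmt_13_general (p e t u v s a b : ℕ) (hp : p.Prime)
    (ht1 : 1 ≤ t) (ht2 : t ≤ e - 1)
    (hu : u ≤ (p - 1) / 2) (hv : v ≤ (p - 1) / 2)
    (hs : 2 * s = p ^ e - 1 - 2 * (u + v * p ^ t))
    (ha : a ≤ 2 * u) (hb : b ≤ 2 * v) :
    ((∑ j ∈ Finset.range e,
        (if j = 0 then p - 1 - a else if j = t then p - 1 - b else p - 1) * p ^ j).choose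
        (2 * s) : ZMod p)
      = (-1) ^ (a + b) * ((2 * u).choose a : ZMod p) * ((2 * v).choose b : ZMod p) := by
  have := Fact.mk hp
  have ht0 : t ≠ 0 := by omega
  have hte : t < e := by omega
  have hle : ∀ j, twoDigits t a b j ≤ twoDigits t (2 * u) (2 * v) j := by
    intro j; unfold twoDigits; split_ifs <;> omega
  have hlt : ∀ j, twoDigits t (2 * u) (2 * v) j < p := by
    have := hp.two_le; intro j; unfold twoDigits; split_ifs <;> omega
  have hn : ∑ j ∈ range e,
        (if j = 0 then p - 1 - a else if j = t then p - 1 - b else p - 1) * p ^ j =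
      ∑ j ∈ range e, (p - 1 - twoDigits t a b j) * p ^ j := by
    simp only [twoDigits, apply_ite (p - 1 - ·), Nat.sub_zero]
  have hk : 2 * s = ∑ j ∈ range e, (p - 1 - twoDigits t (2 * u) (2 * v) j) * p ^ j := by
    have := Nat.sum_mul_pow_add_sum_sub_one_sub_mul_pow hlt e
    rw [sum_twoDigits_mul_pow _ _ ht0 hte, mul_assoc] at this
    omega
  rw [hn, hk, ZMod.natCast_choose_sum_sub_one_sub_mul_pow hle hlt,
    prod_eq_mul_of_mem 0 t (mem_range.mpr (by omega)) (mem_range.mpr hte) ht0.symm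
      fun j _ hj => by simp [twoDigits, hj.1, hj.2]]
  simp only [twoDigits, ↓reduceIte, ht0]
  rw [neg_one_pow_two_mul_sub ha, neg_one_pow_two_mul_sub hb, pow_add]
  ring

theorem stmt_13 (p e t u v s a b : ℕ) (hp : p.Prime) (hodd : Odd p) (he : 2 ≤ e)
    (ht1 : 1 ≤ t) (ht2 : t ≤ e - 1)
    (hu : u ≤ (p - 1) / 2) (hv : v ≤ (p - 1) / 2)
    (hs : 2 * s = p ^ e - 1 - 2 * (u + v * p ^ t))
    (ha : a ≤ 2 * u) (hb : b ≤ 2 * v) :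
    ((∑ j ∈ Finset.range e,
        (if j = 0 then p - 1 - a else if j = t then p - 1 - b else p - 1) * p ^ j).choose
        (2 * s) : ZMod p)
      = (-1) ^ (a + b) * ((2 * u).choose a : ZMod p) * ((2 * v).choose b : ZMod p) :=
  stmt_13_general p e t u v s a b hp ht1 ht2 hu hv hs ha hb
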